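/- Assume in addition that r'(s) > 0 for all s ∈ [0, c_*], and let g : [0,∞) → ℝ be strictly increasing with g(r(c_*)) ≤ 0. Then there is no equilibrium: there exist no h > 0 and twice continuously differentiable c : [0,h] → ℝ with κ·c''(z) = r(c(z)) on [0,h], c'(0) = 0, c(h) + (L·κ/κ_L)·c'(h) = c_*, and ∫₀^h g(r(c(z))) dz = 0. -/

import Mathlib

/-!
If `c(0) < 0` the solution stays negative and decreasing, and if `c(0) > 0` it stays positive
and increasing, with `c'(h) > 0`. In the first case `c(h) + (L κ / κ_L) c'(h) < 0 < c_*`; in the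
second the boundary condition forces `c(h) < c_*`, so `g (r (c z)) ≤ g (r (c h)) < g (r c_*) ≤ 0`
and the integral is negative. If `c(0) = 0`, uniqueness for the Lipschitz system
`(c, c')' = (c', r(c)/κ)` gives `c ≡ 0`, which violates the boundary condition.
-/

open Set intervalIntegral

theorem Continuous.apply_zero_eq_zero_of_mul_pos {r : ℝ → ℝ} (hr : Continuous r)
    (hrsign : ∀ s : ℝ, s ≠ 0 → s * r s > 0) : r 0 = 0 := by
  have hnonneg : 0 ≤ r 0 := (isClosed_le continuous_const hr).closure_subset_iff.2
    (fun s (hs : 0 < s) => (pos_of_mul_pos_right (hrsign s hs.ne') hs.le).le)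
    (closure_Ioi (0 : ℝ) ▸ self_mem_Ici)
  have hnonpos : r 0 ≤ 0 := (isClosed_le hr continuous_const).closure_subset_iff.2
    (fun s (hs : s < 0) => (neg_of_mul_pos_right (hrsign s hs.ne) hs.le).le)
    (closure_Iio (0 : ℝ) ▸ self_mem_Iic)
  exact le_antisymm hnonpos hnonneg

section Interval

variable {a b h : ℝ} {f f' : ℝ → ℝ}

theorem monotoneOn_Icc_of_hasDerivWithinAt_nonneg
    (hf : ∀ z ∈ Icc a h, HasDerivWithinAt f (f' z) (Icc a h) z) (hb : b ≤ h)
    (hf' : ∀ z ∈ Ioo a b, 0 ≤ f' z) : MonotoneOn f (Icc a b) := by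
  have hsub : Icc a b ⊆ Icc a h := Icc_subset_Icc_right hb
  refine monotoneOn_of_hasDerivWithinAt_nonneg (convex_Icc a b)
    (fun z hz => (hf z (hsub hz)).continuousWithinAt.mono hsub) (fun z hz => ?_)
    (by rwa [interior_Icc])
  rw [interior_Icc] at hz ⊢
  exact (hf z (hsub (Ioo_subset_Icc_self hz))).mono (Ioo_subset_Icc_self.trans hsub)

theorem strictMonoOn_Icc_of_hasDerivWithinAt_pos
    (hf : ∀ z ∈ Icc a b, HasDerivWithinAt f (f' z) (Icc a b) z)
    (hf' : ∀ z ∈ Ioo a b, 0 < f' z) : StrictMonoOn f (Icc a b) := by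
  refine strictMonoOn_of_hasDerivWithinAt_pos (convex_Icc a b)
    (fun z hz => (hf z hz).continuousWithinAt) (fun z hz => ?_) (by rwa [interior_Icc])
  rw [interior_Icc] at hz ⊢
  exact (hf z (Ioo_subset_Icc_self hz)).mono Ioo_subset_Icc_self

theorem intervalIntegral_neg_of_monotoneOn (hab : a < b) (hf : MonotoneOn f (Icc a b))
    (hfb : f b < 0) : ∫ x in a..b, f x < 0 :=
  calc ∫ x in a..b, f x
      ≤ ∫ _ in a..b, f b :=
        integral_mono_on hab.le (uIcc_of_le hab.le ▸ hf).intervalIntegrable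
          intervalIntegrable_const fun x hx => hf hx (right_mem_Icc.2 hab.le) hx.2
    _ = (b - a) * f b := by simp
    _ < 0 := mul_neg_of_pos_of_neg (sub_pos.2 hab) hfb

theorem intervalIntegral_comp_neg_of_strictMonoOn {G c : ℝ → ℝ} (hh : 0 < h)
    (hG : StrictMonoOn G (Icc 0 b)) (hGb : G b ≤ 0) (hc : MonotoneOn c (Icc 0 h))
    (hc0 : 0 ≤ c 0) (hch : c h < b) : ∫ z in (0 : ℝ)..h, G (c z) < 0 := by
  have h0mem : (0 : ℝ) ∈ Icc 0 h := left_mem_Icc.2 hh.le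
  have hhmem : h ∈ Icc 0 h := right_mem_Icc.2 hh.le
  have hcmaps : MapsTo c (Icc 0 h) (Icc 0 b) := fun z hz =>
    ⟨hc0.trans (hc h0mem hz hz.1), (hc hz hhmem hz.2).trans hch.le⟩
  refine intervalIntegral_neg_of_monotoneOn hh (hG.monotoneOn.comp hc hcmaps) ?_
  exact (hG (hcmaps hhmem) (right_mem_Icc.2 ((hcmaps hhmem).1.trans_lt hch).le) hch).trans_le hGb

end Interval

theorem StrictMonoOn.comp_of_deriv_pos {g r : ℝ → ℝ} {b : ℝ} (hg : StrictMonoOn g (Ici 0))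
    (hr0 : r 0 = 0) (hr' : ∀ s ∈ Icc 0 b, 0 < deriv r s) :
    StrictMonoOn (g ∘ r) (Icc 0 b) := by
  have hrmono : StrictMonoOn r (Icc 0 b) := strictMonoOn_of_deriv_pos (convex_Icc 0 b)
    (fun s hs => (differentiableAt_of_deriv_ne_zero (hr' s hs).ne').continuousAt.continuousWithinAt)
    fun s hs => hr' s (interior_subset hs)
  exact hg.comp hrmono fun s hs =>
    hr0 ▸ hrmono.monotoneOn (left_mem_Icc.2 (hs.1.trans hs.2)) hs hs.1

section SecondOrder

variable {h : ℝ} {c c' c'' : ℝ → ℝ}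

theorem monotoneOn_and_deriv_pos_of_convex_while_pos (hh : 0 < h)
    (hc : ∀ z ∈ Icc 0 h, HasDerivWithinAt c (c' z) (Icc 0 h) z)
    (hc' : ∀ z ∈ Icc 0 h, HasDerivWithinAt c' (c'' z) (Icc 0 h) z)
    (hc'' : ∀ z ∈ Icc 0 h, 0 < c z → 0 < c'' z) (hc'0 : c' 0 = 0) (hc0 : 0 < c 0) :
    MonotoneOn c (Icc 0 h) ∧ 0 < c' h := by
  have hmono : ∀ b ≤ h, (∀ z ∈ Ico 0 b, 0 < c z) → MonotoneOn c (Icc 0 b) := by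
    intro b hb hpos
    have hc'mono := monotoneOn_Icc_of_hasDerivWithinAt_nonneg hc' hb fun z hz =>
      (hc'' z ⟨hz.1.le, hz.2.le.trans hb⟩ (hpos z (Ioo_subset_Ico_self hz))).le
    refine monotoneOn_Icc_of_hasDerivWithinAt_nonneg hc hb fun z hz => ?_
    simpa [hc'0] using
      hc'mono (left_mem_Icc.2 (hz.1.trans hz.2).le) (Ioo_subset_Icc_self hz) hz.1.le
  have hpos : ∀ z ∈ Icc 0 h, 0 < c z := by
    by_contra! hneg
    obtain ⟨z₀, hz₀, hcz₀⟩ := hneg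
    have hccont : ContinuousOn c (Icc 0 h) := fun z hz => (hc z hz).continuousWithinAt
    have hT : IsCompact (Icc 0 h ∩ c ⁻¹' Iic 0) := isCompact_Icc.of_isClosed_subset
      (hccont.preimage_isClosed_of_isClosed isClosed_Icc isClosed_Iic) inter_subset_left
    -- Before the first point `z₁` where `c ≤ 0`, `c` is positive, hence increasing.
    obtain ⟨z₁, ⟨hz₁, hcz₁⟩, hleast⟩ := hT.exists_isLeast ⟨z₀, hz₀, hcz₀⟩
    have hbefore : ∀ z ∈ Ico 0 z₁, 0 < c z := fun z hz => lt_of_not_ge fun hcz =>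
      hz.2.not_ge (hleast ⟨⟨hz.1, hz.2.le.trans hz₁.2⟩, hcz⟩)
    have := hmono z₁ hz₁.2 hbefore (left_mem_Icc.2 hz₁.1) (right_mem_Icc.2 hz₁.1) hz₁.1
    exact absurd (hc0.trans_le this) (not_lt.2 hcz₁)
  refine ⟨hmono h le_rfl fun z hz => hpos z (Ico_subset_Icc_self hz), ?_⟩
  have := strictMonoOn_Icc_of_hasDerivWithinAt_pos hc' fun z hz =>
    hc'' z (Ioo_subset_Icc_self hz) (hpos z (Ioo_subset_Icc_self hz))
  simpa [hc'0] using this (left_mem_Icc.2 hh.le) (right_mem_Icc.2 hh.le) hh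

theorem eq_zero_of_second_order_ode_of_initial_zero {f : ℝ → ℝ} (hf : ContDiff ℝ 1 f)
    (hf0 : f 0 = 0)
    (hc : ∀ z ∈ Icc 0 h, HasDerivWithinAt c (c' z) (Icc 0 h) z)
    (hc' : ∀ z ∈ Icc 0 h, HasDerivWithinAt c' (c'' z) (Icc 0 h) z)
    (hode : ∀ z ∈ Icc 0 h, c'' z = f (c z)) (hc0 : c 0 = 0) (hc'0 : c' 0 = 0) :
    ∀ z ∈ Icc 0 h, c z = 0 ∧ c' z = 0 := by
  let v : ℝ × ℝ → ℝ × ℝ := fun p => (p.2, f p.1)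
  have hv : ContDiff ℝ 1 v := contDiff_snd.prodMk (hf.comp contDiff_fst)
  have hcont : ContinuousOn (fun z => (c z, c' z)) (Icc 0 h) := fun z hz =>
    (hc z hz).continuousWithinAt.prodMk (hc' z hz).continuousWithinAt
  obtain ⟨R, hR⟩ := (isCompact_Icc.image_of_continuousOn hcont).isBounded.subset_closedBall 0
  obtain ⟨K, hK⟩ := hv.contDiffOn.exists_lipschitzOnWith one_ne_zero (convex_closedBall 0 R)
    (isCompact_closedBall 0 R)
  have hderiv (t : ℝ) (ht : t ∈ Ico 0 h) :
      HasDerivWithinAt (fun z => (c z, c' z)) (v (c t, c' t)) (Ici t) t := by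
    have ht' := Ico_subset_Icc_self ht
    simpa [v, ← hode t ht'] using
      ((hc t ht').prodMk (hc' t ht')).mono_of_mem_nhdsWithin (Icc_mem_nhdsGE_of_mem ht)
  have hzero (t : ℝ) : HasDerivWithinAt (fun _ => (0 : ℝ × ℝ)) (v 0) (Ici t) t := by
    simpa [v, hf0, ← Prod.mk_zero_zero] using hasDerivWithinAt_const t (Ici t) (0 : ℝ × ℝ)
  have hmem (t : ℝ) (ht : t ∈ Ico 0 h) : (c t, c' t) ∈ Metric.closedBall 0 R :=
    hR (mem_image_of_mem _ (Ico_subset_Icc_self ht))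
  have hsol : EqOn (fun z => (c z, c' z)) (fun _ => 0) (Icc 0 h) :=
    ODE_solution_unique_of_mem_Icc_right (v := fun _ => v) (s := fun _ => Metric.closedBall 0 R)
      (fun _ _ => hK) hcont hderiv hmem continuousOn_const (fun t _ => hzero t)
      (fun t ht => Metric.mem_closedBall_self (dist_nonneg.trans (hmem t ht)))
      (by simp [hc0, hc'0])
  exact fun z hz => by simpa using hsol hz

end SecondOrder

theorem no_equilibrium_for_increasing_g_general
    (κ κL L cstar : ℝ) (hκ : 0 < κ) (hκL : 0 < κL) (hL : 0 < L) (hc : 0 < cstar)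
    (r : ℝ → ℝ) (hr : ContDiff ℝ 1 r) (hrsign : ∀ s : ℝ, s ≠ 0 → s * r s > 0)
    (hr'pos : ∀ s ∈ Icc (0:ℝ) cstar, 0 < deriv r s)
    (g : ℝ → ℝ) (hg : StrictMonoOn g (Ici (0:ℝ)))
    (hgc : g (r cstar) ≤ 0) :
    ¬ ∃ (h : ℝ) (c c' c'' : ℝ → ℝ), 0 < h ∧
      (∀ z ∈ Icc (0:ℝ) h, HasDerivWithinAt c (c' z) (Icc (0:ℝ) h) z) ∧
      (∀ z ∈ Icc (0:ℝ) h, HasDerivWithinAt c' (c'' z) (Icc (0:ℝ) h) z) ∧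
      ContinuousOn c'' (Icc (0:ℝ) h) ∧
      (∀ z ∈ Icc (0:ℝ) h, κ * c'' z = r (c z)) ∧
      c' 0 = 0 ∧
      c h + (L * κ / κL) * c' h = cstar ∧
      (∫ z in (0:ℝ)..h, g (r (c z))) = 0 := by
  rintro ⟨h, c, c', c'', hh, hdc, hdc', -, hode, hc'0, hbc, hint⟩
  have hα : 0 < L * κ / κL := by positivity
  have hr0 : r 0 = 0 := hr.continuous.apply_zero_eq_zero_of_mul_pos hrsign
  have hc'' (z) (hz : z ∈ Icc 0 h) : c'' z = r (c z) / κ := by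
    rw [← hode z hz, mul_div_cancel_left₀ _ hκ.ne']
  have h0mem : (0 : ℝ) ∈ Icc 0 h := left_mem_Icc.2 hh.le
  have hhmem : h ∈ Icc 0 h := right_mem_Icc.2 hh.le
  rcases lt_trichotomy (c 0) 0 with hc0 | hc0 | hc0
  · obtain ⟨hmono, hc'h⟩ := monotoneOn_and_deriv_pos_of_convex_while_pos (c := -c) (c' := -c')
      (c'' := -c'') hh (fun z hz => (hdc z hz).neg) (fun z hz => (hdc' z hz).neg)
      (fun z hz hcz => by
        simpa [hc'' z hz] using div_neg_of_neg_of_pos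
          (neg_of_mul_pos_right (hrsign _ (neg_pos.1 hcz).ne) (neg_pos.1 hcz).le) hκ)
      (by simp [hc'0]) (neg_pos.2 hc0)
    have := hmono h0mem hhmem hh.le
    simp only [Pi.neg_apply, neg_le_neg_iff] at this hc'h
    nlinarith
  · obtain ⟨hch, hc'h⟩ := eq_zero_of_second_order_ode_of_initial_zero (hr.div_const κ)
      (by simp [hr0]) hdc hdc' hc'' hc0 hc'0 h hhmem
    simp [hch, hc'h] at hbc
    linarith
  · obtain ⟨hmono, hc'h⟩ := monotoneOn_and_deriv_pos_of_convex_while_pos hh hdc hdc'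
      (fun z hz hcz => hc'' z hz ▸ div_pos (pos_of_mul_pos_right (hrsign _ hcz.ne') hcz.le) hκ)
      hc'0 hc0
    exact (intervalIntegral_comp_neg_of_strictMonoOn hh (hg.comp_of_deriv_pos hr0 hr'pos) hgc
      hmono hc0.le (by nlinarith)).ne hint

theorem no_equilibrium_for_increasing_g
    (κ κL L cstar : ℝ) (hκ : 0 < κ) (hκL : 0 < κL) (hL : 0 < L) (hc : 0 < cstar)
    (r : ℝ → ℝ) (hr : ContDiff ℝ 1 r) (hrsign : ∀ s : ℝ, s ≠ 0 → s * r s > 0)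
    (hr' : ∀ s : ℝ, 0 ≤ deriv r s)
    (hr'pos : ∀ s ∈ Icc (0:ℝ) cstar, 0 < deriv r s)
    (g : ℝ → ℝ) (hg : StrictMonoOn g (Ici (0:ℝ)))
    (hgc : g (r cstar) ≤ 0) :
    ¬ ∃ (h : ℝ) (c c' c'' : ℝ → ℝ), 0 < h ∧
      (∀ z ∈ Icc (0:ℝ) h, HasDerivWithinAt c (c' z) (Icc (0:ℝ) h) z) ∧
      (∀ z ∈ Icc (0:ℝ) h, HasDerivWithinAt c' (c'' z) (Icc (0:ℝ) h) z) ∧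
      ContinuousOn c'' (Icc (0:ℝ) h) ∧
      (∀ z ∈ Icc (0:ℝ) h, κ * c'' z = r (c z)) ∧
      c' 0 = 0 ∧
      c h + (L * κ / κL) * c' h = cstar ∧
      (∫ z in (0:ℝ)..h, g (r (c z))) = 0 :=
  no_equilibrium_for_increasing_g_general κ κL L cstar hκ hκL hL hc r hr hrsign hr'pos g hg hgc
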